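/- arXiv:math/0609191 — 2 statements merged into one kernel-verified Lean document; each statement's English description precedes it below -/
import Mathlib

section
/- Let f : ℝ → ℝ be the inverse of h. Then f(v)² ≤ 2·|v| for every v ∈ ℝ. -/
/-- The change of variables `h(u) = (1/2)·u·√(1+u²) + (1/2)·log(u + √(1+u²))`. -/
noncomputable def h (u : ℝ) : ℝ :=
  (1 / 2) * u * Real.sqrt (1 + u ^ 2) + (1 / 2) * Real.log (u + Real.sqrt (1 + u ^ 2))

lemma sqrt_gt_abs (u : ℝ) : |u| < Real.sqrt (1 + u ^ 2) := by
  have : |u| = Real.sqrt (u ^ 2) := (Real.sqrt_sq_eq_abs u).symm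
  rw [this]
  apply Real.sqrt_lt_sqrt (sq_nonneg u)
  linarith

lemma h_nonneg_bound (u : ℝ) (hu : 0 ≤ u) : u ^ 2 ≤ 2 * h u := by
  have hs : u ≤ Real.sqrt (1 + u ^ 2) := le_of_lt (lt_of_le_of_lt (le_abs_self u) (sqrt_gt_abs u))
  have h1 : (1 : ℝ) ≤ u + Real.sqrt (1 + u ^ 2) := by
    have : (1 : ℝ) ≤ Real.sqrt (1 + u ^ 2) := by
      nlinarith [Real.sq_sqrt (by positivity : (0:ℝ) ≤ 1 + u ^ 2),
        Real.sqrt_nonneg (1 + u ^ 2)]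
    linarith
  have hlog : 0 ≤ Real.log (u + Real.sqrt (1 + u ^ 2)) := Real.log_nonneg h1
  have hmul : u * u ≤ u * Real.sqrt (1 + u ^ 2) := mul_le_mul_of_nonneg_left hs hu
  unfold h
  nlinarith

lemma h_odd (u : ℝ) : h (-u) = - h u := by
  have hs : |u| < Real.sqrt (1 + u ^ 2) := sqrt_gt_abs u
  have hpos : 0 < u + Real.sqrt (1 + u ^ 2) := by
    have := neg_abs_le u; linarith
  have hsq : Real.sqrt (1 + u ^ 2) ^ 2 = 1 + u ^ 2 :=
    Real.sq_sqrt (by positivity)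
  have key : -u + Real.sqrt (1 + u ^ 2) = (u + Real.sqrt (1 + u ^ 2))⁻¹ := by
    field_simp
    nlinarith
  unfold h
  simp only [neg_sq]
  rw [key, Real.log_inv]
  ring

theorem stmt_5 (f : ℝ → ℝ) (hf₁ : Function.LeftInverse f h)
    (hf₂ : Function.RightInverse f h) :
    ∀ v : ℝ, f v ^ 2 ≤ 2 * |v| := by
  intro v
  have hv : h (f v) = v := hf₂ v
  set u := f v with hu
  rw [← hv]
  rcases le_or_gt 0 u with h0 | h0
  · calc u ^ 2 ≤ 2 * h u := h_nonneg_bound u h0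
      _ ≤ 2 * |h u| := by linarith [le_abs_self (h u)]
  · have : (-u) ^ 2 ≤ 2 * h (-u) := h_nonneg_bound (-u) (by linarith)
    rw [h_odd] at this
    have := neg_abs_le (h u)
    calc u ^ 2 = (-u) ^ 2 := by ring
      _ ≤ 2 * |h u| := by linarith [h_nonneg_bound (-u) (le_of_lt (by linarith : (0:ℝ) < -u)), h_odd u, neg_abs_le (h u)]
end

section
/- Let f : ℝ → ℝ be the inverse of h. Then f(v)²/(2v) → 1 as v → +∞; that is, f(v) behaves like √(2v) for v large. -/
/-!
`h u = ∫₀ᵘ √(1 + s²) ds` is the arc length of a parabola, so `h' = √(1 + u²) > 0`, `h` is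
strictly increasing and its inverse `f` tends to `+∞`. For `u ≥ 0` the bounds
`u ≤ √(1 + u²) ≤ u + 1` and `0 ≤ arsinh u ≤ u` give `u² ≤ 2 h(u) ≤ u² + 2u`, hence
`2 h(u) / u² → 1`; substituting `u = f v`, so that `h u = v`, gives the claim.
-/

open Filter

open Real

lemma h_eq_arsinh (u : ℝ) : h u = (u * √(1 + u ^ 2) + arsinh u) / 2 := by
  rw [h, arsinh]; ring

lemma hasDerivAt_h (u : ℝ) : HasDerivAt h (√(1 + u ^ 2)) u := by
  have hsq : √(1 + u ^ 2) ^ 2 = 1 + u ^ 2 := Real.sq_sqrt (by positivity)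
  have hsqrt : HasDerivAt (fun x => √(1 + x ^ 2)) (u / √(1 + u ^ 2)) u := by
    convert ((hasDerivAt_pow 2 u).const_add 1).sqrt (by positivity) using 1
    field_simp; ring
  have key : HasDerivAt (fun x => (x * √(1 + x ^ 2) + arsinh x) / 2)
      ((1 * √(1 + u ^ 2) + u * (u / √(1 + u ^ 2)) + (√(1 + u ^ 2))⁻¹) / 2) u :=
    (((hasDerivAt_id' u).mul hsqrt).add (hasDerivAt_arsinh u)).div_const 2
  rw [show h = _ from funext h_eq_arsinh]
  refine key.congr_deriv ?_
  field_simp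
  rw [hsq]; ring

lemma h_strictMono : StrictMono h :=
  strictMono_of_deriv_pos fun u => (hasDerivAt_h u).deriv ▸ by positivity

lemma sq_le_two_mul_h {u : ℝ} (hu : 0 ≤ u) : u ^ 2 ≤ 2 * h u := by
  have : u ≤ √(1 + u ^ 2) := Real.le_sqrt_of_sq_le (by linarith)
  have : 0 ≤ arsinh u := arsinh_nonneg_iff.2 hu
  rw [h_eq_arsinh]; nlinarith

lemma two_mul_h_le {u : ℝ} (hu : 0 ≤ u) : 2 * h u ≤ u ^ 2 + 2 * u := by
  have : √(1 + u ^ 2) ≤ u + 1 := Real.sqrt_le_iff.2 ⟨by linarith, by nlinarith⟩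
  have : arsinh u ≤ u := by rw [← sinh_le_sinh, sinh_arsinh]; exact self_le_sinh_iff.2 hu
  rw [h_eq_arsinh]; nlinarith

lemma tendsto_two_mul_h_div_sq : Tendsto (fun u => 2 * h u / u ^ 2) atTop (nhds 1) := by
  have upper : Tendsto (fun u : ℝ => 1 + 2 / u) atTop (nhds 1) := by
    simpa using (tendsto_const_nhds (x := (1 : ℝ))).add
      (tendsto_const_nhds.div_atTop tendsto_id)
  refine tendsto_of_tendsto_of_tendsto_of_le_of_le' tendsto_const_nhds upper ?_ ?_
  all_goals filter_upwards [eventually_gt_atTop 0] with u hu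
  · rw [le_div_iff₀ (by positivity)]; linarith [sq_le_two_mul_h hu.le]
  · rw [div_le_iff₀ (by positivity)]
    have := two_mul_h_le hu.le
    field_simp; nlinarith

theorem stmt_7_general (f : ℝ → ℝ)
    (hf₂ : Function.RightInverse f h) :
    Tendsto (fun v : ℝ => f v ^ 2 / (2 * v)) atTop (nhds 1) := by
  have hf : Tendsto f atTop atTop :=
    (h_strictMono.orderIsoOfRightInverse h f hf₂).symm.tendsto_atTop
  have hlim := (tendsto_two_mul_h_div_sq.inv₀ one_ne_zero).comp hf
  simp only [inv_one, Function.comp_def, inv_div, hf₂ _] at hlim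
  exact hlim

theorem stmt_7 (f : ℝ → ℝ) (hf₁ : Function.LeftInverse f h)
    (hf₂ : Function.RightInverse f h) :
    Tendsto (fun v : ℝ => f v ^ 2 / (2 * v)) atTop (nhds 1) :=
  stmt_7_general f hf₂
end
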